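/- Let α be a real algebraic number of degree d with Galois conjugates α = α₁, α₂, …, α_d, and suppose |α_k| = 1 for some k. Let λ₁, …, λ_d be the images of a nonzero algebraic integer λ ∈ ℚ(α) under the d embeddings, and suppose |α_j| > 1 exactly for j ≤ p. If lim_{n→∞} ‖∑_{j=1}^{p} λ_j α_j^n‖ = 0, then a contradiction arises; i.e., limsup_{n→∞} ‖∑_{j=1}^{p} λ_j α_j^n‖ > 0 whenever some conjugate α_k satisfies |α_k| = 1. -/

import Mathlib

/-!
Let `S` be the shift operator on sequences, so that `Z n = ∑_{z ∈ T} Q(z) zⁿ` satisfies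
`μ(S) Z = 0`, and `Z` is real because `T` is closed under conjugation. If `Z n` tends to the
integers, an integer multiple of `μ(S)` applied to the nearest integers `m n` is an integer
sequence tending to `0`, so `μ(S) m = 0` from some index on. The errors `Z n - m n` then satisfy
the same recurrence and tend to `0`; writing `μ = (X - a) h` with `‖a‖ ≥ 1`, the sequence
`h(S)(Z - m)` is geometric of ratio `a` and tends to `0`, hence vanishes. As `a ∉ T`, also
`h(S) Z = 0`, so `h(S) m = 0`. A rational sequence killed by the irreducible `μ` and by a nonzero
`h` of smaller degree is `0`: the Hankel determinant of `m` vanishes over `ℂ`, hence over `ℚ`,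
which yields a rational annihilator coprime to `μ`. So `Z n → 0`, contradicting the term of
`Z` with `‖z₀‖ ≥ 1` and `Q(z₀) ≠ 0`.
-/

open Polynomial Finset Filter

/-- Distance from a real number to the nearest integer. -/
noncomputable def distNearestInt (x : ℝ) : ℝ := |x - (round x : ℤ)|

section SeqShift

variable {R A B : Type*} [CommSemiring R] [CommRing A] [Algebra R A]

noncomputable def seqShift (A : Type*) [CommRing A] : Module.End A (ℕ → A) :=
  LinearMap.funLeft A A (· + 1)

lemma seqShift_apply (w : ℕ → A) (n : ℕ) : seqShift A w n = w (n + 1) := rfl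

lemma seqShift_pow_apply (i : ℕ) (w : ℕ → A) (n : ℕ) : (seqShift A ^ i) w n = w (n + i) := by
  induction i generalizing w with
  | zero => rfl
  | succ i ih => rw [pow_succ, Module.End.mul_apply, ih]; rfl

lemma aeval_seqShift_apply (g : R[X]) {D : ℕ} (hD : g.natDegree < D) (w : ℕ → A) (n : ℕ) :
    aeval (seqShift A) g w n = ∑ i ∈ range D, g.coeff i • w (n + i) := by
  simp [aeval_eq_sum_range' hD, LinearMap.sum_apply, seqShift_pow_apply]

lemma aeval_seqShift_comp_add (g : R[X]) (w : ℕ → A) (N : ℕ) :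
    aeval (seqShift A) g (fun n => w (N + n)) = fun n => aeval (seqShift A) g w (N + n) := by
  funext n
  simp [aeval_seqShift_apply g (lt_add_one _), add_assoc]

lemma aeval_seqShift_algebraMap_comp [CommRing B] [Algebra R B] [Algebra A B] [IsScalarTower R A B]
    (g : R[X]) (w : ℕ → A) :
    aeval (seqShift B) g (algebraMap A B ∘ w) = algebraMap A B ∘ aeval (seqShift A) g w := by
  funext n
  simp only [Function.comp_apply, aeval_seqShift_apply g (lt_add_one _), map_sum]
  exact Finset.sum_congr rfl fun i _ => (map_smul (IsScalarTower.toAlgHom R A B) _ _).symm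

lemma aeval_seqShift_pow (g : R[X]) (z : A) :
    aeval (seqShift A) g (fun n => z ^ n) = aeval z g • fun n => z ^ n := by
  funext n
  rw [aeval_seqShift_apply g (lt_add_one _), Pi.smul_apply, aeval_eq_sum_range, Finset.sum_smul]
  simp [pow_add, mul_comm]

lemma aeval_seqShift_sum_mul_pow (g : R[X]) (T : Finset A) (c : A → A) :
    aeval (seqShift A) g (fun n => ∑ z ∈ T, c z * z ^ n) =
      fun n => ∑ z ∈ T, aeval z g * c z * z ^ n := by
  have hsum : (fun n => ∑ z ∈ T, c z * z ^ n) = ∑ z ∈ T, c z • fun n => z ^ n := by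
    ext; simp
  funext n
  simp [hsum, map_sum, aeval_seqShift_pow, mul_left_comm, mul_assoc]

lemma aeval_seqShift_sum_mul_pow_eq_zero {g : R[X]} {T : Finset A} (hg : ∀ z ∈ T, aeval z g = 0)
    (c : A → A) : aeval (seqShift A) g (fun n => ∑ z ∈ T, c z * z ^ n) = 0 := by
  rw [aeval_seqShift_sum_mul_pow]
  funext n
  simp +contextual [hg]

lemma tendsto_aeval_seqShift [TopologicalSpace A] [IsTopologicalRing A] (g : R[X]) {w : ℕ → A}
    (hw : Tendsto w atTop (nhds 0)) : Tendsto (aeval (seqShift A) g w) atTop (nhds 0) := by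
  have hterm : ∀ i, Tendsto (fun n => g.coeff i • w (n + i)) atTop (nhds 0) := fun i => by
    simpa [Algebra.smul_def] using
      ((hw.comp (tendsto_add_atTop_nat i)).const_mul (algebraMap R A (g.coeff i)))
  simpa [funext (aeval_seqShift_apply g (lt_add_one _) w)] using
    tendsto_finsetSum (range (g.natDegree + 1)) fun i _ => hterm i

end SeqShift

section Normed

variable {𝕜 : Type*} [NormedField 𝕜]

lemma aeval_seqShift_eq_zero_of_tendsto {a : 𝕜} (ha : 1 ≤ ‖a‖) {h : 𝕜[X]} {w : ℕ → 𝕜}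
    (hw : Tendsto w atTop (nhds 0)) (haw : aeval (seqShift 𝕜) ((X - C a) * h) w = 0) :
    aeval (seqShift 𝕜) h w = 0 := by
  set t := aeval (seqShift 𝕜) h w
  have hstep : ∀ n, t (n + 1) = a * t n := fun n => by
    have := congrFun haw n
    rw [map_mul, Module.End.mul_apply] at this
    simpa [sub_eq_zero, seqShift_apply] using this
  have hmono : ∀ n m, ‖t n‖ ≤ ‖t (n + m)‖ := fun n m => by
    induction m with
    | zero => rfl
    | succ m ih =>
      rw [← add_assoc, hstep, norm_mul]
      exact ih.trans (le_mul_of_one_le_left (norm_nonneg _) ha)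
  funext n
  have ht : Tendsto (fun m => ‖t (n + m)‖) atTop (nhds 0) := by
    simpa [add_comm] using ((tendsto_aeval_seqShift h hw).comp (tendsto_add_atTop_nat n)).norm
  exact norm_le_zero_iff.mp (ge_of_tendsto' ht (hmono n))

lemma not_tendsto_sum_mul_pow {T : Finset 𝕜} {z₀ : 𝕜} (hz₀ : z₀ ∈ T) (hz₀1 : 1 ≤ ‖z₀‖)
    {c : 𝕜 → 𝕜} (hc : c z₀ ≠ 0) :
    ¬ Tendsto (fun n => ∑ z ∈ T, c z * z ^ n) atTop (nhds 0) := by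
  classical
  intro hlim
  set h : 𝕜[X] := ∏ z ∈ T.erase z₀, (X - C z)
  have hT : aeval (seqShift 𝕜) ((X - C z₀) * h) (fun n => ∑ z ∈ T, c z * z ^ n) = 0 := by
    rw [Finset.mul_prod_erase T (fun z => X - C z) hz₀]
    refine aeval_seqShift_sum_mul_pow_eq_zero (fun z hz => ?_) c
    simp [Finset.prod_eq_zero_iff, sub_eq_zero, hz]
  have h0 := congrFun (aeval_seqShift_eq_zero_of_tendsto hz₀1 hlim hT) 0
  rw [aeval_seqShift_sum_mul_pow] at h0
  simp only [pow_zero, mul_one, Pi.zero_apply] at h0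
  rw [Finset.sum_eq_single_of_mem z₀ hz₀ fun z hz hne => by
    simp [h, Finset.prod_eq_zero_iff, sub_eq_zero, hz, hne]] at h0
  have hz₀h : aeval z₀ h ≠ 0 := by
    simp [h, Finset.prod_eq_zero_iff, sub_eq_zero]
  exact mul_ne_zero hz₀h hc h0

end Normed

section Field

lemma eq_zero_of_aeval_seqShift_of_forall_lt_natDegree {R : Type*} [CommRing R] [NoZeroDivisors R]
    {μ : R[X]} (hμ : μ ≠ 0) {r : ℕ → R} (hr : aeval (seqShift R) μ r = 0)
    (hinit : ∀ n < μ.natDegree, r n = 0) : r = 0 := by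
  funext n
  induction n using Nat.strong_induction_on with
  | _ n ih =>
    obtain hn | hn := lt_or_ge n μ.natDegree
    · exact hinit n hn
    obtain ⟨m, rfl⟩ := Nat.exists_eq_add_of_le' hn
    have hm := congrFun hr m
    rw [aeval_seqShift_apply μ (lt_add_one _), sum_range_succ,
      Finset.sum_eq_zero fun i hi => by simp [ih (m + i) (by simp at hi; omega)]] at hm
    simpa [hμ, add_comm] using hm

variable {K L : Type*} [Field K] [Field L] [Algebra K L]

def hankel {R : Type*} (s : ℕ → R) (d : ℕ) : Matrix (Fin d) (Fin d) R :=
  Matrix.of fun n i => s (n + i)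

lemma hankel_mulVec_degreeLTEquiv (s : ℕ → K) {d : ℕ} (g : degreeLT K d) (n : Fin d) :
    (hankel s d).mulVec (degreeLTEquiv K d g) n = aeval (seqShift K) (g : K[X]) s n := by
  have hg : (g : K[X]).natDegree < d := by
    rcases eq_or_ne (g : K[X]) 0 with h0 | h0
    · simpa [h0] using n.pos
    · exact (natDegree_lt_iff_degree_lt h0).mpr (mem_degreeLT.mp g.2)
  rw [aeval_seqShift_apply _ hg,
    ← Fin.sum_univ_eq_sum_range (fun i => (g : K[X]).coeff i • s (n + i))]
  simp [hankel, Matrix.mulVec, dotProduct, degreeLTEquiv, mul_comm]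

lemma exists_aeval_seqShift_eq_zero_of_algebraMap (s : ℕ → K) {d : ℕ} {h : L[X]}
    (hmem : h ∈ degreeLT L d) (h0 : h ≠ 0)
    (hh : ∀ n < d, aeval (seqShift L) h (algebraMap K L ∘ s) n = 0) :
    ∃ g ∈ degreeLT K d, g ≠ 0 ∧ ∀ n < d, aeval (seqShift K) g s n = 0 := by
  have hdetL : ((hankel s d).map (algebraMap K L)).det = 0 := by
    refine Matrix.exists_mulVec_eq_zero_iff.mp ⟨degreeLTEquiv L d ⟨h, hmem⟩, by simpa using h0, ?_⟩
    funext n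
    exact (hankel_mulVec_degreeLTEquiv (algebraMap K L ∘ s) ⟨h, hmem⟩ n).trans (hh n n.isLt)
  have hdet : (hankel s d).det = 0 := by
    rwa [← RingHom.mapMatrix_apply, ← RingHom.map_det,
      map_eq_zero_iff _ (algebraMap K L).injective] at hdetL
  obtain ⟨c, hc0, hc⟩ := Matrix.exists_mulVec_eq_zero_iff.mpr hdet
  set g := (degreeLTEquiv K d).symm c
  refine ⟨g, g.2, ?_, fun n hn => ?_⟩
  · simpa [g] using hc0
  · rw [← hankel_mulVec_degreeLTEquiv s g ⟨n, hn⟩]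
    simp [g, hc]

lemma eq_zero_of_aeval_seqShift_algebraMap {μ : K[X]} (hμ : Irreducible μ) {s : ℕ → K}
    (hs : aeval (seqShift K) μ s = 0) {h : L[X]} (h0 : h ≠ 0) (hdeg : h.natDegree < μ.natDegree)
    (hh : aeval (seqShift L) h (algebraMap K L ∘ s) = 0) : s = 0 := by
  obtain ⟨g, hgmem, hg0, hgs⟩ := exists_aeval_seqShift_eq_zero_of_algebraMap s
    (mem_degreeLT.mpr (degree_le_natDegree.trans_lt (by exact_mod_cast hdeg))) h0
    fun n _ => by rw [hh]; rfl
  have hμg : aeval (seqShift K) μ (aeval (seqShift K) g s) = 0 := by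
    rw [← Module.End.mul_apply, ← map_mul, mul_comm, map_mul, Module.End.mul_apply, hs, map_zero]
  have hgs' : aeval (seqShift K) g s = 0 :=
    eq_zero_of_aeval_seqShift_of_forall_lt_natDegree hμ.ne_zero hμg hgs
  have hcop : IsCoprime μ g := hμ.coprime_iff_not_dvd.mpr fun hdvd =>
    (natDegree_le_of_dvd hdvd hg0).not_gt
      ((natDegree_lt_iff_degree_lt hg0).mpr (mem_degreeLT.mp hgmem))
  exact Submodule.disjoint_def.mp (disjoint_ker_aeval_of_isCoprime (seqShift K) hcop) s hs hgs'

end Field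

lemma eventually_aeval_seqShift_round_eq_zero {μ : ℤ[X]} {x : ℕ → ℝ}
    (hx : aeval (seqShift ℝ) μ x = 0)
    (hlim : Tendsto (fun n => distNearestInt (x n)) atTop (nhds 0)) :
    ∀ᶠ n in atTop, aeval (seqShift ℤ) μ (fun n => round (x n)) n = 0 := by
  set m : ℕ → ℤ := fun n => round (x n)
  have herr : Tendsto (fun n => x n - m n) atTop (nhds 0) :=
    (tendsto_zero_iff_abs_tendsto_zero _).mpr hlim
  have hcast : Int.cast ∘ aeval (seqShift ℤ) μ m = -aeval (seqShift ℝ) μ (fun n => x n - m n) := by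
    have := aeval_seqShift_algebraMap_comp μ m (B := ℝ)
    have hsub : (fun n => x n - m n) = x - algebraMap ℤ ℝ ∘ m := by ext; simp
    rw [hsub, map_sub, hx, this]
    ext; simp
  have hT : Tendsto (Int.cast ∘ aeval (seqShift ℤ) μ m : ℕ → ℝ) atTop (nhds 0) := by
    rw [hcast, Pi.neg_def]
    simpa only [neg_zero] using (tendsto_aeval_seqShift μ herr).neg
  filter_upwards [hT.eventually (Metric.ball_mem_nhds 0 one_pos)] with n hn
  rw [Function.comp_apply, dist_zero_right, Real.norm_eq_abs, ← Int.cast_abs] at hn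
  exact Int.abs_lt_one_iff.mp (by exact_mod_cast hn)

lemma exists_aeval_seqShift_round_eq_zero {μ : ℚ[X]} {x : ℕ → ℝ}
    (hx : aeval (seqShift ℝ) μ x = 0)
    (hlim : Tendsto (fun n => distNearestInt (x n)) atTop (nhds 0)) :
    ∃ N, aeval (seqShift ℚ) μ (fun n => ((round (x (N + n)) : ℤ) : ℚ)) = 0 := by
  obtain ⟨b, hb, hμb⟩ := IsLocalization.integerNormalization_spec (nonZeroDivisors ℤ) μ
  set μ' := IsLocalization.integerNormalization (nonZeroDivisors ℤ) μ
  have hb0 : b ≠ 0 := nonZeroDivisors.ne_zero hb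
  have hx' : aeval (seqShift ℝ) μ' x = 0 := by
    rw [← aeval_map_algebraMap ℚ, hμb, map_zsmul, LinearMap.smul_apply, hx, smul_zero]
  obtain ⟨N, hN⟩ := eventually_atTop.mp (eventually_aeval_seqShift_round_eq_zero hx' hlim)
  have hZ : aeval (seqShift ℤ) μ' (fun n => round (x (N + n))) = 0 := by
    rw [aeval_seqShift_comp_add μ' (fun n => round (x n)) N]
    funext n
    exact hN _ (Nat.le_add_right N n)
  have hQ := aeval_seqShift_algebraMap_comp μ' (fun n => round (x (N + n))) (B := ℚ)
  rw [hZ, ← aeval_map_algebraMap ℚ, hμb, map_zsmul, LinearMap.smul_apply] at hQ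
  refine ⟨N, (smul_eq_zero.mp ?_).resolve_left hb0⟩
  simpa [Function.comp_def, ← Pi.zero_def] using hQ

theorem tendsto_zero_of_tendsto_distNearestInt {μ : ℚ[X]} (hμ : Irreducible μ) {a : ℂ}
    (ha : 1 ≤ ‖a‖) {h : ℂ[X]} (hfac : μ.map (algebraMap ℚ ℂ) = (X - C a) * h) {x : ℕ → ℝ}
    (hμx : aeval (seqShift ℝ) μ x = 0) (hhx : aeval (seqShift ℂ) h (fun n => (x n : ℂ)) = 0)
    (hlim : Tendsto (fun n => distNearestInt (x n)) atTop (nhds 0)) :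
    Tendsto x atTop (nhds 0) := by
  have hh0 : h ≠ 0 :=
    right_ne_zero_of_mul (hfac ▸ map_ne_zero (f := algebraMap ℚ ℂ) hμ.ne_zero)
  have hdeg : h.natDegree < μ.natDegree := by
    have := congrArg natDegree hfac
    rw [natDegree_map, natDegree_mul (X_sub_C_ne_zero a) hh0, natDegree_X_sub_C] at this
    omega
  obtain ⟨N, hs⟩ := exists_aeval_seqShift_round_eq_zero hμx hlim
  set s : ℕ → ℚ := fun n => round (x (N + n))
  set y : ℕ → ℂ := fun n => x (N + n)
  have hδ : Tendsto (y - algebraMap ℚ ℂ ∘ s) atTop (nhds 0) := by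
    refine tendsto_zero_iff_norm_tendsto_zero.mpr
      (((tendsto_add_atTop_iff_nat N).mpr hlim).congr fun n => ?_)
    simp [y, s, distNearestInt, add_comm, ← Complex.ofReal_intCast, ← Complex.ofReal_sub]
  have hμy : aeval (seqShift ℂ) μ y = 0 := by
    change aeval (seqShift ℂ) μ (algebraMap ℝ ℂ ∘ fun n => x (N + n)) = 0
    rw [aeval_seqShift_algebraMap_comp, aeval_seqShift_comp_add, hμx]
    funext n
    simp
  have hμs : aeval (seqShift ℂ) μ (algebraMap ℚ ℂ ∘ s) = 0 := by
    rw [aeval_seqShift_algebraMap_comp, hs]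
    funext n
    simp
  have hhy : aeval (seqShift ℂ) h y = 0 := by
    rw [aeval_seqShift_comp_add h (fun n => (x n : ℂ)) N, hhx]
    rfl
  have hhδ : aeval (seqShift ℂ) h (y - algebraMap ℚ ℂ ∘ s) = 0 := by
    refine aeval_seqShift_eq_zero_of_tendsto ha hδ ?_
    rw [← hfac, aeval_map_algebraMap, map_sub, hμy, hμs, sub_zero]
  have hs0 : s = 0 := by
    refine eq_zero_of_aeval_seqShift_algebraMap hμ hs hh0 hdeg ?_
    rwa [map_sub, hhy, zero_sub, neg_eq_zero] at hhδ
  rw [← tendsto_add_atTop_iff_nat N, tendsto_zero_iff_abs_tendsto_zero]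
  refine ((tendsto_add_atTop_iff_nat N).mpr hlim).congr fun n => ?_
  have hround : round (x (n + N)) = 0 := by simpa [s, add_comm] using congrFun hs0 n
  simp [distNearestInt, hround]

section Conjugation

open ComplexConjugate

lemma aeval_conj_rat (F : ℚ[X]) (z : ℂ) : aeval (conj z) F = conj (aeval z F) := by
  rw [← aeval_map_algebraMap ℝ z F, ← aeval_map_algebraMap ℝ (conj z) F, aeval_conj]

lemma conj_sum_aeval {T : Finset ℂ} (hT : ∀ z ∈ T, conj z ∈ T) (F : ℚ[X]) :
    conj (∑ z ∈ T, aeval z F) = ∑ z ∈ T, aeval z F := by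
  rw [map_sum]
  exact Finset.sum_nbij' conj conj hT hT (by simp) (by simp) fun z _ => (aeval_conj_rat F z).symm

theorem not_tendsto_distNearestInt_re_sum_aeval_mul_pow {μ : ℚ[X]} (hμ : Irreducible μ) {a : ℂ}
    (ha : aeval a μ = 0) (ha1 : 1 ≤ ‖a‖) {T : Finset ℂ} (hTμ : ∀ z ∈ T, aeval z μ = 0)
    (haT : a ∉ T) (hTconj : ∀ z ∈ T, conj z ∈ T) {z₀ : ℂ} (hz₀ : z₀ ∈ T) (hz₀1 : 1 ≤ ‖z₀‖)
    {Q : ℚ[X]} (hQ : aeval z₀ Q ≠ 0) :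
    ¬ Tendsto (fun n => distNearestInt (∑ z ∈ T, aeval z Q * z ^ n).re) atTop (nhds 0) := by
  intro hlim
  set Z : ℕ → ℂ := fun n => ∑ z ∈ T, aeval z Q * z ^ n
  have hZ : (fun n => ((Z n).re : ℂ)) = Z := funext fun n => by
    rw [← Complex.conj_eq_iff_re]
    have := conj_sum_aeval hTconj (Q * X ^ n)
    simp only [aeval_mul, aeval_X_pow] at this
    exact this
  set h := μ.map (algebraMap ℚ ℂ) /ₘ (X - C a)
  have hfac : μ.map (algebraMap ℚ ℂ) = (X - C a) * h :=
    (mul_divByMonic_eq_iff_isRoot.mpr (by simpa [eval_map_algebraMap] using ha)).symm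
  have hhT : ∀ z ∈ T, aeval z h = 0 := fun z hz => by
    have := congrArg (eval z) hfac
    simpa [eval_map_algebraMap, hTμ z hz, sub_eq_zero, ne_of_mem_of_not_mem hz haT] using this
  have hμx : aeval (seqShift ℝ) μ (fun n => (Z n).re) = 0 := by
    have := aeval_seqShift_algebraMap_comp μ (fun n => (Z n).re) (B := ℂ)
    rw [show algebraMap ℝ ℂ ∘ (fun n => (Z n).re) = Z from hZ,
      aeval_seqShift_sum_mul_pow_eq_zero hTμ] at this
    exact funext fun n => by simpa using (congrFun this n).symm
  have hx := tendsto_zero_of_tendsto_distNearestInt hμ ha1 hfac hμx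
    (by rw [hZ]; exact aeval_seqShift_sum_mul_pow_eq_zero hhT _) hlim
  refine not_tendsto_sum_mul_pow hz₀ hz₀1 (c := fun z => aeval z Q) hQ ?_
  change Tendsto Z atTop (nhds 0)
  rw [← hZ, ← Complex.ofReal_zero]
  exact (Complex.continuous_ofReal.tendsto 0).comp hx

end Conjugation

lemma image_univ_eq_aroots_toFinset {K L ι : Type*} [Field K] [Field L] [Algebra K L]
    [Fintype ι] [DecidableEq L] {μ : K[X]} (hμ : μ ≠ 0) {r : ι → L} (hr : Function.Injective r)
    (hroot : ∀ i, aeval (r i) μ = 0) (hcard : Fintype.card ι = μ.natDegree) :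
    univ.image r = (μ.aroots L).toFinset := by
  have hμL : μ.map (algebraMap K L) ≠ 0 := Polynomial.map_ne_zero hμ
  refine Finset.eq_of_subset_of_card_le (fun w hw => ?_) ?_
  · obtain ⟨i, -, rfl⟩ := Finset.mem_image.mp hw
    simpa [mem_aroots, hμL] using hroot i
  · rw [card_image_of_injective _ hr, card_univ, hcard]
    exact (Multiset.toFinset_card_le _).trans ((card_roots' _).trans natDegree_map_le)

lemma aeval_ne_zero_of_aeval_minpoly_eq_zero {K A L : Type*} [Field K] [Ring A] [IsDomain A]
    [Algebra K A] [Field L] [Algebra K L] {α : A} (hα : IsIntegral K α) {z : L}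
    (hz : aeval z (minpoly K α) = 0) {Q : K[X]} (hQ : aeval α Q ≠ 0) : aeval z Q ≠ 0 := by
  have hmin : minpoly K α = minpoly K z :=
    minpoly.eq_of_irreducible_of_monic (minpoly.irreducible hα) hz (minpoly.monic hα)
  intro hQz
  exact hQ (minpoly.dvd_iff.mp (hmin ▸ minpoly.dvd K z hQz))

theorem stmt13_general (α : ℝ) (hα : IsAlgebraic ℚ α)
    (d : ℕ) (hd : d = (minpoly ℚ α).natDegree)
    (conj : Fin d → ℂ) (hinj : Function.Injective conj)
    (hconj : ∀ i, Polynomial.aeval (conj i) (minpoly ℚ α) = 0)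
    (p : ℕ) (hp : 1 ≤ p)
    (hsplit : ∀ j : Fin d, ((j : ℕ) < p ↔ 1 < ‖conj j‖))
    (hk : ∃ k : Fin d, ‖conj k‖ = 1)
    (Q : Polynomial ℚ)
    (hQ0 : Polynomial.aeval α Q ≠ 0) :
    ¬ Tendsto
      (fun n : ℕ => distNearestInt
        (∑ j ∈ Finset.univ.filter (fun j : Fin d => (j : ℕ) < p),
          Polynomial.aeval (conj j) Q * conj j ^ n).re)
      atTop (nhds 0) := by
  classical
  have hint : IsIntegral ℚ α := hα.isIntegral
  have hμ0 : minpoly ℚ α ≠ 0 := minpoly.ne_zero hint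
  obtain ⟨k, hk⟩ := hk
  have hz₀ : 1 < ‖conj ⟨0, k.pos⟩‖ := (hsplit _).mp hp
  set T := ((minpoly ℚ α).aroots ℂ).toFinset.filter fun z => 1 < ‖z‖
  have hmemT : ∀ z, z ∈ T ↔ aeval z (minpoly ℚ α) = 0 ∧ 1 < ‖z‖ := by
    simp [T, hμ0]
  have hT : T = (univ.filter fun j : Fin d => (j : ℕ) < p).image conj := by
    simp only [T, ← image_univ_eq_aroots_toFinset hμ0 hinj hconj (by simp [hd]), filter_image,
      hsplit]
  have hsum : ∀ n, ∑ j ∈ univ.filter (fun j : Fin d => (j : ℕ) < p), aeval (conj j) Q * conj j ^ n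
      = ∑ z ∈ T, aeval z Q * z ^ n := fun n => by
    rw [hT, sum_image fun _ _ _ _ h => hinj h]
  simp only [hsum]
  refine not_tendsto_distNearestInt_re_sum_aeval_mul_pow (minpoly.irreducible hint) (hconj k)
    hk.ge (fun z hz => ((hmemT z).mp hz).1) (fun hkT => ?_) (fun z hz => ?_)
    ((hmemT _).mpr ⟨hconj _, hz₀⟩) hz₀.le
    (aeval_ne_zero_of_aeval_minpoly_eq_zero hint (hconj _) hQ0)
  · exact (hk ▸ ((hmemT _).mp hkT).2).false
  · obtain ⟨hroot, hnorm⟩ := (hmemT z).mp hz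
    exact (hmemT _).mpr ⟨by rw [aeval_conj_rat, hroot, map_zero], by rwa [Complex.norm_conj]⟩

/-- let `α` be a real algebraic number of degree `d` with Galois
conjugates `conj 0, …, conj (d-1)` (the roots of its minimal polynomial over `ℚ`),
with `|conj j| > 1` exactly for `j < p` (`p ≥ 1`), and some conjugate of modulus
exactly `1`. Let `λ = Q(α)` be a nonzero algebraic integer in `ℚ(α)`, with
conjugate images `λ_j = Q(conj j)`. Then
`limsup_n ‖∑_{j<p} λ_j (conj j)^n‖ > 0`; i.e. `‖∑_{j<p} λ_j (conj j)^n‖` does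
not tend to `0`. -/
theorem stmt13 (α : ℝ) (hα : IsAlgebraic ℚ α)
    (d : ℕ) (hd : d = (minpoly ℚ α).natDegree)
    (conj : Fin d → ℂ) (hinj : Function.Injective conj)
    (hconj : ∀ i, Polynomial.aeval (conj i) (minpoly ℚ α) = 0)
    (p : ℕ) (hp : 1 ≤ p)
    (hsplit : ∀ j : Fin d, ((j : ℕ) < p ↔ 1 < ‖conj j‖))
    (hk : ∃ k : Fin d, ‖conj k‖ = 1)
    (Q : Polynomial ℚ)
    (hQint : IsIntegral ℤ (Polynomial.aeval α Q))
    (hQ0 : Polynomial.aeval α Q ≠ 0) :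
    ¬ Tendsto
      (fun n : ℕ => distNearestInt
        (∑ j ∈ Finset.univ.filter (fun j : Fin d => (j : ℕ) < p),
          Polynomial.aeval (conj j) Q * conj j ^ n).re)
      atTop (nhds 0) :=
  stmt13_general α hα d hd conj hinj hconj p hp hsplit hk Q hQ0
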